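/- Let C be a quasi-hereditary Hom-finite dualizing K-category with respect to an exhaustive filtration {B_j}, with standard modules Δ(i) and costandard modules ∇(j) = D(C(E,-)/I_{B_{j-1}}(E,-)) for E ∈ B_j. If Hom(Δ_X(i), ∇_Y(j)) ≠ 0 then i = j. -/

import Mathlib

open CategoryTheory Opposite

universe v u

namespace QH

set_option synthInstance.maxHeartbeats 1000000
set_option maxHeartbeats 1000000

variable (K : Type v) [Field K]
variable {C : Type u} [Category.{v} C] [Preadditive C] [CategoryTheory.Linear K C]

/-- The set of morphisms `X ⟶ Y` factoring through an object of the full subcategory `B`. -/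
def factorSet (B : Set C) (X Y : C) : Set (X ⟶ Y) :=
  {f | ∃ E ∈ B, ∃ (g : X ⟶ E) (h : E ⟶ Y), f = g ≫ h}

/-- The ideal `I_B(X,Y)` generated by morphisms factoring through objects of `B`. -/
def ideal (B : Set C) (X Y : C) : Submodule K (X ⟶ Y) :=
  Submodule.span K (factorSet B X Y)

lemma comp_mem_left {B : Set C} {W X Y : C} (h : W ⟶ X) {f : X ⟶ Y}
    (hf : f ∈ ideal K B X Y) : h ≫ f ∈ ideal K B W Y := by
  induction hf using Submodule.span_induction with
  | mem f hf =>
    obtain ⟨E, hE, g, k, rfl⟩ := hf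
    exact Submodule.subset_span ⟨E, hE, h ≫ g, k, by simp⟩
  | zero => simp
  | add a b _ _ ha hb => simpa [Preadditive.comp_add] using (ideal K B W Y).add_mem ha hb
  | smul r a _ ha => simpa [CategoryTheory.Linear.comp_smul] using (ideal K B W Y).smul_mem r ha

lemma comp_mem_right {B : Set C} {X Y Z : C} {f : X ⟶ Y} (h : Y ⟶ Z)
    (hf : f ∈ ideal K B X Y) : f ≫ h ∈ ideal K B X Z := by
  induction hf using Submodule.span_induction with
  | mem f hf =>
    obtain ⟨E, hE, g, k, rfl⟩ := hf
    exact Submodule.subset_span ⟨E, hE, g, k ≫ h, by simp⟩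
  | zero => simp
  | add a b _ _ ha hb => simpa [Preadditive.add_comp] using (ideal K B X Z).add_mem ha hb
  | smul r a _ ha => simpa [CategoryTheory.Linear.smul_comp] using (ideal K B X Z).smul_mem r ha

/-- `Y` is a direct summand of `X`. -/
def Summand (Y X : C) : Prop :=
  ∃ (s : Y ⟶ X) (r : X ⟶ Y), s ≫ r = 𝟙 Y

/-- A full subcategory (set of objects) closed under direct summands. -/
def SummandClosed (B : Set C) : Prop :=
  ∀ X ∈ B, ∀ Y : C, Summand Y X → Y ∈ B

/-- An object is indecomposable: nonzero, and its endomorphism ring has no nontrivial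
idempotents. -/
def Indec (X : C) : Prop :=
  (𝟙 X ≠ 0) ∧ ∀ e : X ⟶ X, e ≫ e = e → e = 0 ∨ e = 𝟙 X

/-- The Jacobson radical of the category `C`. -/
def rad (X Y : C) : Set (X ⟶ Y) :=
  {f | ∀ g : Y ⟶ X, IsUnit (show CategoryTheory.End X from 𝟙 X - f ≫ g)}

/-- The preimage in `C` of the Jacobson radical of the quotient category `C/I_B`. -/
def radMod (B : Set C) (X Y : C) : Set (X ⟶ Y) :=
  {f | ∀ g : Y ⟶ X, ∃ u : X ⟶ X,
      (𝟙 X - f ≫ g) ≫ u - 𝟙 X ∈ ideal K B X X ∧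
      u ≫ (𝟙 X - f ≫ g) - 𝟙 X ∈ ideal K B X X}

/-- Products of two composable morphisms of the ideal of `B`. -/
def prodSet (B : Set C) (X Y : C) : Set (X ⟶ Y) :=
  {f | ∃ (Z : C) (g : X ⟶ Z) (h : Z ⟶ Y), g ∈ ideal K B X Z ∧ h ∈ ideal K B Z Y ∧ f = g ≫ h}

/-- The functor `I_B(-,X) : Cᵒᵖ ⥤ ModuleCat K`. -/
def idealFunctor (B : Set C) (X : C) : Cᵒᵖ ⥤ ModuleCat K where
  obj Y := ModuleCat.of K (ideal K B Y.unop X)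
  map {Y Z} f := ModuleCat.ofHom <| LinearMap.codRestrict _
      (((Linear.leftComp K X f.unop)).comp (ideal K B Y.unop X).subtype)
      (fun m => comp_mem_left K f.unop m.2)
  map_id Y := by
    refine ModuleCat.hom_ext (LinearMap.ext fun m => ?_)
    apply Subtype.ext
    show 𝟙 Y.unop ≫ m.1 = m.1
    rw [Category.id_comp]
  map_comp {Y Z W} f g := by
    refine ModuleCat.hom_ext (LinearMap.ext fun m => ?_)
    apply Subtype.ext
    show (g.unop ≫ f.unop) ≫ m.1 = g.unop ≫ (f.unop ≫ m.1)
    rw [Category.assoc]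

/-- The standard module `Δ = C(-,X)/I_B(-,X)`. -/
noncomputable def std (B : Set C) (X : C) : Cᵒᵖ ⥤ ModuleCat K where
  obj Y := ModuleCat.of K ((Y.unop ⟶ X) ⧸ ideal K B Y.unop X)
  map {Y Z} f := ModuleCat.ofHom <| Submodule.mapQ _ _ (Linear.leftComp K X f.unop)
      (fun m hm => comp_mem_left K f.unop hm)
  map_id Y := by
    refine ModuleCat.hom_ext (Submodule.linearMap_qext _ ?_)
    refine LinearMap.ext fun g => ?_
    show Submodule.Quotient.mk (𝟙 Y.unop ≫ g) = Submodule.Quotient.mk g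
    rw [Category.id_comp]
  map_comp {Y Z W} f g := by
    refine ModuleCat.hom_ext (Submodule.linearMap_qext _ ?_)
    refine LinearMap.ext fun m => ?_
    show Submodule.Quotient.mk ((g.unop ≫ f.unop) ≫ m) =
      Submodule.Quotient.mk (g.unop ≫ (f.unop ≫ m))
    rw [Category.assoc]

/-- The covariant standard module `Δ° = C(X,-)/I_B(X,-)`. -/
noncomputable def covStd (B : Set C) (X : C) : C ⥤ ModuleCat K where
  obj Y := ModuleCat.of K ((X ⟶ Y) ⧸ ideal K B X Y)
  map {Y Z} f := ModuleCat.ofHom <| Submodule.mapQ _ _ (Linear.rightComp K X f)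
      (fun m hm => comp_mem_right K f hm)
  map_id Y := by
    refine ModuleCat.hom_ext (Submodule.linearMap_qext _ ?_)
    refine LinearMap.ext fun g => ?_
    show Submodule.Quotient.mk (g ≫ 𝟙 Y) = Submodule.Quotient.mk g
    rw [Category.comp_id]
  map_comp {Y Z W} f g := by
    refine ModuleCat.hom_ext (Submodule.linearMap_qext _ ?_)
    refine LinearMap.ext fun m => ?_
    show Submodule.Quotient.mk (m ≫ (f ≫ g)) =
      Submodule.Quotient.mk ((m ≫ f) ≫ g)
    rw [Category.assoc]

/-- The linear map underlying `covStd` on morphisms. -/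
noncomputable def covStdMap (B : Set C) (X : C) {Y Z : C} (f : Y ⟶ Z) :
    ((X ⟶ Y) ⧸ ideal K B X Y) →ₗ[K] ((X ⟶ Z) ⧸ ideal K B X Z) :=
  Submodule.mapQ _ _ (Linear.rightComp K X f) (fun m hm => comp_mem_right K f hm)

/-- The costandard module `∇ = D(C(X,-)/I_B(X,-))`, the `K`-dual of the covariant
standard module. -/
noncomputable def nabla (B : Set C) (X : C) : Cᵒᵖ ⥤ ModuleCat K where
  obj Y := ModuleCat.of K (Module.Dual K ((X ⟶ Y.unop) ⧸ ideal K B X Y.unop))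
  map {Y Z} f := ModuleCat.ofHom (covStdMap K B X f.unop).dualMap
  map_id Y := by
    dsimp
    refine ModuleCat.hom_ext (LinearMap.ext fun φ => ?_)
    refine LinearMap.ext fun m => ?_
    obtain ⟨m, rfl⟩ := Submodule.Quotient.mk_surjective _ m
    let ψ : Module.Dual K ((X ⟶ Y.unop) ⧸ ideal K B X Y.unop) := φ
    show ψ (Submodule.Quotient.mk (m ≫ 𝟙 Y.unop)) = ψ (Submodule.Quotient.mk m)
    rw [Category.comp_id]
  map_comp {Y Z W} f g := by
    dsimp
    refine ModuleCat.hom_ext (LinearMap.ext fun φ => ?_)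
    refine LinearMap.ext fun m => ?_
    obtain ⟨m, rfl⟩ := Submodule.Quotient.mk_surjective _ m
    let ψ : Module.Dual K ((X ⟶ Y.unop) ⧸ ideal K B X Y.unop) := φ
    show ψ (Submodule.Quotient.mk (m ≫ (g.unop ≫ f.unop))) =
      ψ (Submodule.Quotient.mk ((m ≫ g.unop) ≫ f.unop))
    rw [Category.assoc]

end QH

namespace QH

set_option synthInstance.maxHeartbeats 1000000
set_option maxHeartbeats 1000000

variable (K : Type v) [Field K]
variable {C : Type u} [Category.{v} C] [Preadditive C] [CategoryTheory.Linear K C]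

/-- The trace of the family of representable functors `{C(-,E)}_{E ∈ B}` in `F`, at `Y`. -/
def trace (B : Set C) (F : Cᵒᵖ ⥤ ModuleCat K) (Y : C) : Submodule K (F.obj (op Y)) :=
  Submodule.span K {m | ∃ E ∈ B, ∃ (g : Y ⟶ E) (x : F.obj (op E)), m = F.map g.op x}

lemma trace_map_mem {B : Set C} {F : Cᵒᵖ ⥤ ModuleCat K} {Y Z : C} (f : Z ⟶ Y)
    {m : F.obj (op Y)} (hm : m ∈ trace K B F Y) : F.map f.op m ∈ trace K B F Z := by
  induction hm using Submodule.span_induction with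
  | mem m hm =>
    obtain ⟨E, hE, g, x, rfl⟩ := hm
    refine Submodule.subset_span ⟨E, hE, f ≫ g, x, ?_⟩
    rw [op_comp, F.map_comp]
    rfl
  | zero => simp
  | add a b _ _ ha hb => rw [map_add]; exact (trace K B F Z).add_mem ha hb
  | smul r a _ ha => rw [map_smul]; exact (trace K B F Z).smul_mem r ha

/-- The trace subfunctor `F^{(B)} ⊆ F`. -/
def traceFunctor (B : Set C) (F : Cᵒᵖ ⥤ ModuleCat K) : Cᵒᵖ ⥤ ModuleCat K where
  obj Y := ModuleCat.of K (trace K B F Y.unop)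
  map {Y Z} f := ModuleCat.ofHom <| LinearMap.codRestrict _
      ((F.map f).hom.comp (trace K B F Y.unop).subtype)
      (fun m => trace_map_mem K f.unop m.2)
  map_id Y := by
    refine ModuleCat.hom_ext (LinearMap.ext fun m => ?_)
    apply Subtype.ext
    show (F.map (𝟙 Y)) m.1 = m.1
    rw [F.map_id]; rfl
  map_comp {Y Z W} f g := by
    refine ModuleCat.hom_ext (LinearMap.ext fun m => ?_)
    apply Subtype.ext
    show (F.map (f ≫ g)) m.1 = (F.map g) ((F.map f) m.1)
    rw [F.map_comp]; rfl

/-- The quotient `F^{(B')}/F^{(B)}` of two steps of the trace filtration. -/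
noncomputable def traceQuot (B B' : Set C) (F : Cᵒᵖ ⥤ ModuleCat K) : Cᵒᵖ ⥤ ModuleCat K where
  obj Y := ModuleCat.of K
    (↥(trace K B' F Y.unop) ⧸ ((trace K B F Y.unop).comap (trace K B' F Y.unop).subtype))
  map {Y Z} f := ModuleCat.ofHom <| Submodule.mapQ _ _
    (LinearMap.codRestrict _ ((F.map f).hom.comp (trace K B' F Y.unop).subtype)
      (fun m => trace_map_mem K f.unop m.2))
    (fun m hm => by
      simp only [Submodule.mem_comap] at hm ⊢
      exact trace_map_mem K f.unop hm)
  map_id Y := by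
    refine ModuleCat.hom_ext (Submodule.linearMap_qext _ ?_)
    refine LinearMap.ext fun m => ?_
    show Submodule.Quotient.mk _ = Submodule.Quotient.mk _
    congr 1
    apply Subtype.ext
    show (F.map (𝟙 Y)) m.1 = m.1
    rw [F.map_id]; rfl
  map_comp {Y Z W} f g := by
    refine ModuleCat.hom_ext (Submodule.linearMap_qext _ ?_)
    refine LinearMap.ext fun m => ?_
    show Submodule.Quotient.mk _ = Submodule.Quotient.mk _
    congr 1
    apply Subtype.ext
    show (F.map (f ≫ g)) m.1 = (F.map g) ((F.map f) m.1)
    rw [F.map_comp]; rfl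

/-- The quotient module `I_{B'}(-,X)/I_B(-,X)` (for `B ⊆ B'`), as a functor. -/
noncomputable def subquot (B B' : Set C) (X : C) : Cᵒᵖ ⥤ ModuleCat K where
  obj Y := ModuleCat.of K
    (↥(ideal K B' Y.unop X) ⧸ ((ideal K B Y.unop X).comap (ideal K B' Y.unop X).subtype))
  map {Y Z} f := ModuleCat.ofHom <| Submodule.mapQ _ _
    (LinearMap.codRestrict _ ((Linear.leftComp K X f.unop).comp (ideal K B' Y.unop X).subtype)
      (fun m => comp_mem_left K f.unop m.2))
    (fun m hm => by
      simp only [Submodule.mem_comap] at hm ⊢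
      exact comp_mem_left K f.unop hm)
  map_id Y := by
    refine ModuleCat.hom_ext (Submodule.linearMap_qext _ ?_)
    refine LinearMap.ext fun m => ?_
    show Submodule.Quotient.mk _ = Submodule.Quotient.mk _
    congr 1
    apply Subtype.ext
    show 𝟙 Y.unop ≫ m.1 = m.1
    rw [Category.id_comp]
  map_comp {Y Z W} f g := by
    refine ModuleCat.hom_ext (Submodule.linearMap_qext _ ?_)
    refine LinearMap.ext fun m => ?_
    show Submodule.Quotient.mk _ = Submodule.Quotient.mk _
    congr 1
    apply Subtype.ext
    show (g.unop ≫ f.unop) ≫ m.1 = g.unop ≫ (f.unop ≫ m.1)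
    rw [Category.assoc]

/-- A module is a finite direct sum of, or more generally a retract of a finite direct
sum of, "representable" modules of the quotient category `C/I_B`, i.e. of the modules
`C(-,E)/I_B(-,E)`.  This is the notion of a finitely generated projective
`C/I_B`-module. -/
noncomputable def FgProjOver (B : Set C) (M : Cᵒᵖ ⥤ ModuleCat K) : Prop :=
  ∃ (n : ℕ) (E : Fin n → C) (p : ∀ i, std K B (E i) ⟶ M) (s : ∀ i, M ⟶ std K B (E i)),
    (∑ i, s i ≫ p i) = 𝟙 M

/-- The ideal `I_B/I_{Bprev}` is a heredity ideal of the quotient category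
`C/I_{Bprev}` (all conditions expressed elementwise in `C`):
idempotency modulo `I_{Bprev}`, the condition `(I/I')·rad(C/I')·(I/I') = 0`,
and finitely generated projectivity of the modules `(I_B/I_{Bprev})(-,X)`. -/
noncomputable def HeredityQuot (Bprev B : Set C) : Prop :=
  (∀ X Y : C, ideal K B X Y ≤ Submodule.span K (prodSet K B X Y) ⊔ ideal K Bprev X Y) ∧
  (∀ {W X Y Z : C} (f : W ⟶ X) (t : X ⟶ Y) (s : Y ⟶ Z),
      f ∈ ideal K B W X → t ∈ radMod K Bprev X Y → s ∈ ideal K B Y Z →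
      f ≫ t ≫ s ∈ ideal K Bprev W Z) ∧
  (∀ X : C, FgProjOver K Bprev (subquot K Bprev B X))

/-- An exhaustive filtration of `C` by full subcategories closed under direct summands,
starting at the zero subcategory. -/
structure IsFiltration (Bf : ℕ → Set C) : Prop where
  zero : Bf 0 = ∅
  mono : Monotone Bf
  exhaustive : ∀ X : C, ∃ i, X ∈ Bf i
  closed : ∀ i, SummandClosed (Bf i)

/-- `C` is quasi-hereditary with respect to the filtration `Bf`: each
`I_{B_i}/I_{B_{i-1}}` is a heredity ideal in `C/I_{B_{i-1}}`. -/
noncomputable def QuasiHereditary (Bf : ℕ → Set C) : Prop :=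
  ∀ i : ℕ, HeredityQuot K (Bf i) (Bf (i + 1))

/-- `F` has a Δ-filtration: its trace filtration is exhaustive and each successive
quotient `F^{(i)}/F^{(i-1)}` is a finite direct sum of standard modules from `Δ(i)`. -/
noncomputable def HasDeltaFiltration (Bf : ℕ → Set C) (F : Cᵒᵖ ⥤ ModuleCat K) : Prop :=
  (∀ (Y : C) (m : F.obj (op Y)), ∃ i, m ∈ trace K (Bf i) F Y) ∧
  ∀ i : ℕ, ∃ (n : ℕ) (E : Fin n → C), (∀ k, E k ∈ Bf (i + 1)) ∧
    ∃ (p : ∀ k, std K (Bf i) (E k) ⟶ traceQuot K (Bf i) (Bf (i + 1)) F)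
      (s : ∀ k, traceQuot K (Bf i) (Bf (i + 1)) F ⟶ std K (Bf i) (E k)),
      ((∑ k, s k ≫ p k) = 𝟙 _) ∧ (∀ k, p k ≫ s k = 𝟙 _) ∧
      (∀ k l, k ≠ l → p k ≫ s l = 0)

/-- Pointwise short exact sequence of modules. -/
def PSES {F G H : Cᵒᵖ ⥤ ModuleCat K} (f : F ⟶ G) (g : G ⟶ H) : Prop :=
  ∀ Y : Cᵒᵖ, Function.Injective (f.app Y) ∧ Function.Surjective (g.app Y) ∧
    ∀ x : G.obj Y, g.app Y x = 0 ↔ x ∈ Set.range (f.app Y)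

/-- `Ext¹(A, N) = 0`, expressed by the splitting of all short exact sequences
`0 → N → M → A → 0`. -/
def Ext1Zero (A N : Cᵒᵖ ⥤ ModuleCat K) : Prop :=
  ∀ (M : Cᵒᵖ ⥤ ModuleCat K) (ι : N ⟶ M) (π : M ⟶ A),
    PSES K ι π → ∃ s : A ⟶ M, s ≫ π = 𝟙 A

/-- `F` is finitely presented: there is an exact sequence
`C(-,E₁) → C(-,E₀) → F → 0` (encoded pointwise via the Yoneda lemma). -/
def FinPres (F : Cᵒᵖ ⥤ ModuleCat K) : Prop :=
  ∃ (E₁ E₀ : C) (u : E₁ ⟶ E₀) (x : F.obj (op E₀)),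
    F.map u.op x = 0 ∧
    (∀ (Y : C) (m : F.obj (op Y)), ∃ g : Y ⟶ E₀, F.map g.op x = m) ∧
    (∀ (Y : C) (g : Y ⟶ E₀), F.map g.op x = 0 → ∃ h : Y ⟶ E₁, h ≫ u = g)

/-- A covariant module is finitely presented. -/
def FinPresCo (F : C ⥤ ModuleCat K) : Prop :=
  ∃ (E₁ E₀ : C) (u : E₀ ⟶ E₁) (x : F.obj E₀),
    F.map u x = 0 ∧
    (∀ (Y : C) (m : F.obj Y), ∃ g : E₀ ⟶ Y, F.map g x = m) ∧
    (∀ (Y : C) (g : E₀ ⟶ Y), F.map g x = 0 → ∃ h : E₁ ⟶ Y, u ≫ h = g)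

/-- The `K`-dual of the covariant representable functor `C(X,-)`, as a contravariant
module: `Y ↦ (X ⟶ Y)^*`. -/
noncomputable def dualCoyoneda (X : C) : Cᵒᵖ ⥤ ModuleCat K where
  obj Y := ModuleCat.of K (Module.Dual K (X ⟶ Y.unop))
  map {Y Z} f := ModuleCat.ofHom (Linear.rightComp K X f.unop).dualMap
  map_id Y := by
    dsimp
    refine ModuleCat.hom_ext (LinearMap.ext fun φ => ?_)
    refine LinearMap.ext fun m => ?_
    let ψ : Module.Dual K (X ⟶ Y.unop) := φ
    show ψ (m ≫ 𝟙 Y.unop) = ψ m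
    rw [Category.comp_id]
  map_comp {Y Z W} f g := by
    dsimp
    refine ModuleCat.hom_ext (LinearMap.ext fun φ => ?_)
    refine LinearMap.ext fun m => ?_
    let ψ : Module.Dual K (X ⟶ Y.unop) := φ
    show ψ (m ≫ (g.unop ≫ f.unop)) = ψ ((m ≫ g.unop) ≫ f.unop)
    rw [Category.assoc]

/-- The `K`-dual of the contravariant representable functor `C(-,X)`, as a covariant
module: `Y ↦ (Y ⟶ X)^*`. -/
noncomputable def dualYoneda (X : C) : C ⥤ ModuleCat K where
  obj Y := ModuleCat.of K (Module.Dual K (Y ⟶ X))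
  map {Y Z} f := ModuleCat.ofHom (Linear.leftComp K X f).dualMap
  map_id Y := by
    refine ModuleCat.hom_ext (LinearMap.ext fun φ => ?_)
    refine LinearMap.ext fun m => ?_
    let ψ : Module.Dual K (Y ⟶ X) := φ
    show ψ (𝟙 Y ≫ m) = ψ m
    rw [Category.id_comp]
  map_comp {Y Z W} f g := by
    refine ModuleCat.hom_ext (LinearMap.ext fun φ => ?_)
    refine LinearMap.ext fun m => ?_
    let ψ : Module.Dual K (Y ⟶ X) := φ
    show ψ ((f ≫ g) ≫ m) = ψ (f ≫ (g ≫ m))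
    rw [Category.assoc]

/-- `C` is a dualizing category: the `K`-duals of the representable functors are
finitely presented (on both sides). -/
noncomputable def Dualizing : Prop :=
  (∀ X : C, FinPres K (dualCoyoneda K X)) ∧ (∀ X : C, FinPresCo K (dualYoneda K X))

/-- `C` is Noetherian: every subfunctor of a representable functor is finitely
generated. -/
def NoetherianCat : Prop :=
  ∀ (X : C) (S : ∀ Y : C, Submodule K (Y ⟶ X)),
    (∀ {Y Z : C} (h : Z ⟶ Y), ∀ f ∈ S Y, h ≫ f ∈ S Z) →
    ∃ (n : ℕ) (E : Fin n → C) (e : ∀ i, E i ⟶ X), (∀ i, e i ∈ S (E i)) ∧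
      ∀ (Y : C), ∀ f ∈ S Y,
        f ∈ Submodule.span K {g : Y ⟶ X | ∃ (i : Fin n) (h : Y ⟶ E i), g = h ≫ e i}

/-- `C` is a Krull-Schmidt category: every object is a finite direct sum of objects
with local endomorphism rings. -/
def KrullSchmidt : Prop :=
  ∀ X : C, ∃ (n : ℕ) (Y : Fin n → C) (p : ∀ i, X ⟶ Y i) (s : ∀ i, Y i ⟶ X),
    ((∑ i, p i ≫ s i) = 𝟙 X) ∧ (∀ i, s i ≫ p i = 𝟙 (Y i)) ∧
    (∀ i j, i ≠ j → s i ≫ p j = 0) ∧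
    ∀ i, IsLocalRing (CategoryTheory.End (Y i))

/-- The endomorphism of the standard module `Δ_X = C(-,X)/I_B(-,X)` induced by an
endomorphism of `X`. -/
noncomputable def stdEndNat (B : Set C) {X : C} (f : X ⟶ X) : std K B X ⟶ std K B X where
  app Y := ModuleCat.ofHom <| Submodule.mapQ _ _ (Linear.rightComp K Y.unop f)
      (fun m hm => comp_mem_right K f hm)
  naturality {Y Z} g := by
    refine ModuleCat.hom_ext (Submodule.linearMap_qext _ ?_)
    refine LinearMap.ext fun m => ?_
    show Submodule.Quotient.mk ((g.unop ≫ m) ≫ f) = Submodule.Quotient.mk (g.unop ≫ (m ≫ f))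
    rw [Category.assoc]

end QH

namespace QH

set_option synthInstance.maxHeartbeats 1000000
set_option maxHeartbeats 1000000

variable (K : Type v) [Field K]
variable {C : Type u} [Category.{v} C] [Preadditive C] [CategoryTheory.Linear K C]

open scoped Classical in
/-- The family of tensor products of values. -/
noncomputable abbrev tfam (M : Cᵒᵖ ⥤ ModuleCat K) (N : C ⥤ ModuleCat K) : C → Type v :=
  fun c => TensorProduct K (M.obj (op c) : Type v) (N.obj c : Type v)

open scoped Classical in
open TensorProduct in
/-- The relations defining the tensor product `M ⊗_C N` of a contravariant and a
covariant `C`-module. -/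
noncomputable def tensorRels (M : Cᵒᵖ ⥤ ModuleCat K) (N : C ⥤ ModuleCat K) :
    Submodule K (DirectSum C (tfam K M N)) :=
  Submodule.span K {x | ∃ (c d : C) (f : c ⟶ d) (m : M.obj (op d)) (n : N.obj c),
    x = DirectSum.lof K C (tfam K M N) c ((M.map f.op m) ⊗ₜ n)
      - DirectSum.lof K C (tfam K M N) d (m ⊗ₜ (N.map f n))}

/-- The tensor product `M ⊗_C N` over the category `C`. -/
noncomputable def tensorGrp (M : Cᵒᵖ ⥤ ModuleCat K) (N : C ⥤ ModuleCat K) : Type (max u v) :=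
  DirectSum C (tfam K M N) ⧸ tensorRels K M N

noncomputable instance (M : Cᵒᵖ ⥤ ModuleCat K) (N : C ⥤ ModuleCat K) :
    AddCommGroup (tensorGrp K M N) := by unfold tensorGrp; infer_instance

noncomputable instance (M : Cᵒᵖ ⥤ ModuleCat K) (N : C ⥤ ModuleCat K) :
    Module K (tensorGrp K M N) := by unfold tensorGrp; infer_instance

open scoped Classical in
open TensorProduct in
/-- The map `M ⊗_C N ⟶ M' ⊗_C N` induced by a morphism `M ⟶ M'`. -/
noncomputable def tensorMap {M M' : Cᵒᵖ ⥤ ModuleCat K} (N : C ⥤ ModuleCat K)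
    (φ : M ⟶ M') : tensorGrp K M N →ₗ[K] tensorGrp K M' N :=
  Submodule.mapQ (tensorRels K M N) (tensorRels K M' N)
    (DirectSum.toModule K C (DirectSum C (tfam K M' N))
      (fun c => (DirectSum.lof K C (tfam K M' N) c).comp
        (TensorProduct.map (φ.app (op c)).hom (LinearMap.id (M := (N.obj c : Type v))))))
    (by
      rw [tensorRels, Submodule.span_le]
      rintro x ⟨c, d, f, m, n, rfl⟩
      simp only [SetLike.mem_coe, Submodule.mem_comap, map_sub, DirectSum.toModule_lof,
        LinearMap.coe_comp, Function.comp_apply, TensorProduct.map_tmul, LinearMap.id_coe, id_eq]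
      have hnat : (φ.app (op c)).hom (M.map f.op m) = M'.map f.op ((φ.app (op d)).hom m) := by
        have h := φ.naturality f.op
        exact congrArg (fun (ψ : M.obj (op d) ⟶ M'.obj (op c)) => ψ m) h
      rw [hnat]
      exact Submodule.subset_span ⟨c, d, f, φ.app (op d) m, n, rfl⟩)

/-- Precomposition on `Hom`-groups of the module category. -/
def homMap {A B V : Cᵒᵖ ⥤ ModuleCat K} (d : A ⟶ B) : (B ⟶ V) →+ (A ⟶ V) :=
  AddMonoidHom.mk' (fun φ => d ≫ φ) (fun φ ψ => by simp [Preadditive.comp_add])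

/-- A finitely generated projective module over `C`: a retract of a finite direct sum
of representable functors. -/
def FgProjC (M : Cᵒᵖ ⥤ ModuleCat K) : Prop :=
  ∃ (n : ℕ) (E : Fin n → C) (p : ∀ i, (linearYoneda K C).obj (E i) ⟶ M)
    (s : ∀ i, M ⟶ (linearYoneda K C).obj (E i)),
    (∑ i, s i ≫ p i) = 𝟙 M

/-- A resolution of `F` by finitely generated projective modules, expressed by
pointwise exactness. -/
def IsFgProjResolution (F : Cᵒᵖ ⥤ ModuleCat K) (P : ℕ → (Cᵒᵖ ⥤ ModuleCat K))
    (d : ∀ n, P (n + 1) ⟶ P n) (ε : P 0 ⟶ F) : Prop :=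
  (∀ n, FgProjC K (P n)) ∧
  (∀ Y : Cᵒᵖ, Function.Surjective (ε.app Y)) ∧
  (∀ (Y : Cᵒᵖ) (x : (P 0).obj Y), ε.app Y x = 0 ↔ x ∈ Set.range ((d 0).app Y)) ∧
  (∀ (n : ℕ) (Y : Cᵒᵖ) (x : (P (n + 1)).obj Y),
    (d n).app Y x = 0 ↔ x ∈ Set.range ((d (n + 1)).app Y))

/-- `Ext^t(F, V) = 0` for all `t ≥ 1`: for every finitely generated projective
resolution of `F`, the induced `Hom(-,V)`-complex is exact in all positive degrees. -/
def HigherExtVanish (F V : Cᵒᵖ ⥤ ModuleCat K) : Prop :=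
  ∀ (P : ℕ → (Cᵒᵖ ⥤ ModuleCat K)) (d : ∀ n, P (n + 1) ⟶ P n) (ε : P 0 ⟶ F),
    IsFgProjResolution K F P d ε →
    ∀ n : ℕ, Function.Exact (homMap K (V := V) (d n)) (homMap K (V := V) (d (n + 1)))

/-- `Tor_t(F, N) = 0` for all `t ≥ 1`: for every finitely generated projective
resolution of `F`, the complex obtained by tensoring with `N` is exact in all
positive degrees. -/
noncomputable def HigherTorVanish (F : Cᵒᵖ ⥤ ModuleCat K) (N : C ⥤ ModuleCat K) : Prop :=
  ∀ (P : ℕ → (Cᵒᵖ ⥤ ModuleCat K)) (d : ∀ n, P (n + 1) ⟶ P n) (ε : P 0 ⟶ F),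
    IsFgProjResolution K F P d ε →
    ∀ n : ℕ, Function.Exact (tensorMap K N (d (n + 1))) (tensorMap K N (d n))

/-- `Tor₁(F, N) = 0`: for every finitely generated projective resolution of `F`,
the tensored complex is exact in degree 1. -/
noncomputable def Tor1Vanish (F : Cᵒᵖ ⥤ ModuleCat K) (N : C ⥤ ModuleCat K) : Prop :=
  ∀ (P : ℕ → (Cᵒᵖ ⥤ ModuleCat K)) (d : ∀ n, P (n + 1) ⟶ P n) (ε : P 0 ⟶ F),
    IsFgProjResolution K F P d ε →
    Function.Exact (tensorMap K N (d 1)) (tensorMap K N (d 0))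

end QH

namespace QH

set_option synthInstance.maxHeartbeats 1000000
set_option maxHeartbeats 1000000

variable (K : Type v) [Field K]
variable {C : Type u} [Category.{v} C] [Preadditive C] [CategoryTheory.Linear K C]

/-- There is an exact sequence `C(-,E') → C(-,E) → I_B(-,X) → 0` with `E' ∈ Bprev` and
`E ∈ B` (encoded pointwise via the Yoneda lemma). -/
def IdealPresented (Bprev B : Set C) (X : C) : Prop :=
  ∃ (E' E : C), E' ∈ Bprev ∧ E ∈ B ∧ ∃ (u : E' ⟶ E) (e : E ⟶ X),
    e ∈ ideal K B E X ∧
    (∀ (Y : C), ∀ f ∈ ideal K B Y X, ∃ g : Y ⟶ E, g ≫ e = f) ∧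
    u ≫ e = 0 ∧
    (∀ (Y : C) (g : Y ⟶ E), g ≫ e = 0 → ∃ h : Y ⟶ E', h ≫ u = g)

/-- `M` is (isomorphic to) a finite direct sum of representable functors `C(-,E)` with
`E ∈ B`. -/
def IsFiniteDirectSumOfReps (B : Set C) (M : Cᵒᵖ ⥤ ModuleCat K) : Prop :=
  ∃ (n : ℕ) (E : Fin n → C), (∀ i, E i ∈ B) ∧
    ∃ (p : ∀ i, (linearYoneda K C).obj (E i) ⟶ M)
      (s : ∀ i, M ⟶ (linearYoneda K C).obj (E i)),
      ((∑ i, s i ≫ p i) = 𝟙 M) ∧ (∀ i, p i ≫ s i = 𝟙 _) ∧ (∀ i j, i ≠ j → p i ≫ s j = 0)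

/-- `I_B` is a heredity ideal of `C`: it is idempotent, `I_B · rad_C · I_B = 0`, and
each `I_B(-,X)` is a finitely generated projective `C`-module. -/
def IdealHeredity (B : Set C) : Prop :=
  (∀ X Y : C, ideal K B X Y ≤ Submodule.span K (prodSet K B X Y)) ∧
  (∀ {W X Y Z : C} (f : W ⟶ X) (t : X ⟶ Y) (s : Y ⟶ Z),
      f ∈ ideal K B W X → t ∈ rad X Y → s ∈ ideal K B Y Z → f ≫ t ≫ s = 0) ∧
  (∀ X : C, FgProjC K (idealFunctor K B X))

/-- `M` kills the ideal `I_B`, i.e. `M` is a module over the quotient category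
`C/I_B`. -/
def Kills (B : Set C) (M : Cᵒᵖ ⥤ ModuleCat K) : Prop :=
  ∀ ⦃X Y : C⦄ (f : X ⟶ Y), f ∈ ideal K B X Y → M.map f.op = 0

/-- `Q` is a projective module over the quotient category `C/I_B`: it has the
lifting property against all pointwise surjections of (additive) `C/I_B`-modules. -/
def ProjOverQuot (B : Set C) (Q : Cᵒᵖ ⥤ ModuleCat K) : Prop :=
  ∀ (M N : Cᵒᵖ ⥤ ModuleCat K), M.Additive → N.Additive → Kills K B M → Kills K B N →
    ∀ (e : M ⟶ N), (∀ Y : Cᵒᵖ, Function.Surjective (e.app Y)) →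
    ∀ φ : Q ⟶ N, ∃ ψ : Q ⟶ M, ψ ≫ e = φ

end QH

namespace QH

set_option synthInstance.maxHeartbeats 1000000
set_option maxHeartbeats 1000000

/-!
STATEMENT 8: Let `C` be a quasi-hereditary Hom-finite dualizing (Krull-Schmidt)
`K`-category with respect to an exhaustive filtration `{B_j}`, with standard modules
`Δ_X(i)` and costandard modules `∇_Y(j) = D(C(Y,-)/I_{B_{j-1}}(Y,-))`.
If `Hom(Δ_X(i), ∇_Y(j)) ≠ 0`, then `i = j`.  (Indices `≥ 1` written `+ 1`.)
-/
theorem hom_std_nabla_ne_zero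
    (K : Type v) [Field K]
    {C : Type u} [Category.{v} C] [Preadditive C] [CategoryTheory.Linear K C]
    (hfin : ∀ X Y : C, FiniteDimensional K (X ⟶ Y))
    (hKS : KrullSchmidt (C := C)) (hdual : Dualizing K (C := C))
    (Bf : ℕ → Set C) (hfil : IsFiltration Bf) (hqh : QuasiHereditary K Bf)
    (i j : ℕ) (X Y : C) (hX : X ∈ Bf (i + 1)) (hY : Y ∈ Bf (j + 1))
    (η : std K (Bf i) X ⟶ nabla K (Bf j) Y) (hη : η ≠ 0) :
    i = j := by
  by_contra hne
  apply hη
  set φ : Module.Dual K ((Y ⟶ X) ⧸ ideal K (Bf j) Y X) :=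
    η.app (op X) (Submodule.Quotient.mk (𝟙 X)) with hφdef
  -- φ vanishes on classes of morphisms in the ideal of `Bf i`.
  have hkeri : ∀ f ∈ ideal K (Bf i) Y X, φ (Submodule.Quotient.mk f) = 0 := by
    intro f hf
    induction hf using Submodule.span_induction with
    | mem f hf =>
      obtain ⟨E, hE, g, h, rfl⟩ := hf
      have hnat := η.naturality h.op
      have hev := congrArg (fun (ψ : (std K (Bf i) X).obj (op X) ⟶
          (nabla K (Bf j) Y).obj (op E)) => ψ (Submodule.Quotient.mk (𝟙 X) : (std K (Bf i) X).obj (op X))) hnat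
      have hL : (std K (Bf i) X).map h.op (Submodule.Quotient.mk (𝟙 X))
          = (0 : (std K (Bf i) X).obj (op E)) := by
        show (Submodule.Quotient.mk (h ≫ 𝟙 X) :
          (E ⟶ X) ⧸ ideal K (Bf i) E X) = 0
        rw [Category.comp_id, Submodule.Quotient.mk_eq_zero]
        exact Submodule.subset_span ⟨E, hE, 𝟙 E, h, (Category.id_comp h).symm⟩
      replace hev : η.app (op E) ((std K (Bf i) X).map h.op (Submodule.Quotient.mk (𝟙 X))) =
          (nabla K (Bf j) Y).map h.op (η.app (op X) (Submodule.Quotient.mk (𝟙 X))) := hev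
      rw [hL, map_zero] at hev
      have hev' := congrArg
        (fun (ψ : Module.Dual K ((Y ⟶ E) ⧸ ideal K (Bf j) Y E)) =>
          ψ (Submodule.Quotient.mk g)) hev.symm
      exact hev'
    | zero => simp
    | add a b _ _ ha hb =>
      rw [show (Submodule.Quotient.mk (a + b) :
          (Y ⟶ X) ⧸ ideal K (Bf j) Y X) = Submodule.Quotient.mk a
          + Submodule.Quotient.mk b from rfl, map_add, ha, hb, add_zero]
    | smul r a _ ha =>
      rw [show (Submodule.Quotient.mk (r • a) :
          (Y ⟶ X) ⧸ ideal K (Bf j) Y X) = r • Submodule.Quotient.mk a from rfl,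
        map_smul, ha, smul_zero]
  -- φ vanishes on all classes.
  have key : ∀ f : Y ⟶ X, φ (Submodule.Quotient.mk f) = 0 := by
    intro f
    rcases lt_or_gt_of_ne hne with h | h
    · -- i < j : f factors through X ∈ Bf (i+1) ⊆ Bf j
      have hf : f ∈ ideal K (Bf j) Y X :=
        Submodule.subset_span ⟨X, hfil.mono h hX, f, 𝟙 X, (Category.comp_id f).symm⟩
      rw [(Submodule.Quotient.mk_eq_zero _).mpr hf, map_zero]
    · -- j < i : f factors through Y ∈ Bf (j+1) ⊆ Bf i
      exact hkeri f
        (Submodule.subset_span ⟨Y, hfil.mono h hY, 𝟙 Y, f, (Category.id_comp f).symm⟩)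
  -- conclude η = 0
  apply NatTrans.ext
  funext Z
  induction Z using Opposite.rec with
  | op Z =>
  refine ModuleCat.hom_ext (LinearMap.ext fun x => ?_)
  obtain ⟨f, rfl⟩ := Submodule.Quotient.mk_surjective _ x
  have hnat := η.naturality f.op
  have hev := congrArg (fun (ψ : (std K (Bf i) X).obj (op X) ⟶
      (nabla K (Bf j) Y).obj (op Z)) => ψ (Submodule.Quotient.mk (𝟙 X) : (std K (Bf i) X).obj (op X))) hnat
  replace hev : η.app (op Z) ((std K (Bf i) X).map f.op (Submodule.Quotient.mk (𝟙 X))) =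
      (nabla K (Bf j) Y).map f.op (η.app (op X) (Submodule.Quotient.mk (𝟙 X))) := hev
  have hL : (std K (Bf i) X).map f.op (Submodule.Quotient.mk (𝟙 X))
      = (Submodule.Quotient.mk f : (Z ⟶ X) ⧸ ideal K (Bf i) Z X) := by
    show (Submodule.Quotient.mk (f ≫ 𝟙 X) :
      (Z ⟶ X) ⧸ ideal K (Bf i) Z X) = Submodule.Quotient.mk f
    rw [Category.comp_id]
  rw [hL] at hev
  rw [hev]
  refine LinearMap.ext fun m => ?_
  obtain ⟨g, rfl⟩ := Submodule.Quotient.mk_surjective _ m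
  show φ (Submodule.Quotient.mk (g ≫ f)) = _
  rw [key (g ≫ f)]
  rfl

end QH
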